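/- arXiv:2104.06659 — 8 statements merged into one kernel-verified Lean document; each statement's English description precedes it below -/
import Mathlib

section
/- Let M be nonsingular with M* = M (or more generally an orthosymmetric matrix), and let A ∈ K^{n×n} be M-self-adjoint (i.e., M⁻¹A*M = A) with no purely imaginary eigenvalues. Then sign(A) = A(A²)^{-1/2}, and the canonical generalized polar decomposition A = WS with respect to M exists and satisfies W = sign(A). -/
/-!
Let `T⋆ = M⁻¹ Tᴴ M` be the `M`-adjoint of the principal square root `T` of `A²`. Since `⋆` is an
anti-automorphism fixing `A`, `(T⋆)² = (A⋆)² = A²`; since it only conjugates eigenvalues, `T⋆` again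
has spectrum in the open right half-plane. Principal square roots are unique (if `P² = Q²` then
`P (P - Q) = (P - Q) (-Q)`, and a Sylvester equation whose coefficients share no eigenvalue has only
the zero solution), so `T⋆ = T`. Hence `W = A T⁻¹` satisfies `W⋆ W = T⁻¹ A² T⁻¹ = 1`.
-/

open Matrix Polynomial

namespace Matrix

variable {m n K : Type*} [Fintype m] [DecidableEq m] [Fintype n] [DecidableEq n]

theorem aeval_mul_eq_mul_aeval [CommSemiring K] {P : Matrix m m K} {Q : Matrix n n K}
    {X : Matrix m n K} (h : P * X = X * Q) (p : K[X]) :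
    aeval P p * X = X * aeval Q p := by
  have hpow (k : ℕ) : P ^ k * X = X * Q ^ k := by
    induction k with
    | zero => simp
    | succ k ih => rw [pow_succ, pow_succ, Matrix.mul_assoc, h, ← Matrix.mul_assoc, ih,
        Matrix.mul_assoc]
  induction p using Polynomial.induction_on' with
  | add p q hp hq => simp only [map_add, Matrix.add_mul, Matrix.mul_add, hp, hq]
  | monomial k a =>
    simp only [aeval_monomial, algebraMap_eq_diagonal, Pi.algebraMap_def, Algebra.algebraMap_self,
      RingHom.id_apply, ← smul_one_eq_diagonal, Matrix.smul_mul, Matrix.mul_smul, Matrix.one_mul,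
      hpow]

/-- Sylvester's theorem. -/
theorem eq_zero_of_mul_eq_mul_of_disjoint_spectrum [Field K] [IsAlgClosed K]
    {P : Matrix m m K} {Q : Matrix n n K} {X : Matrix m n K}
    (hPQ : Disjoint (spectrum K P) (spectrum K Q)) (h : P * X = X * Q) : X = 0 := by
  cases isEmpty_or_nonempty m
  · exact Subsingleton.elim _ _
  have hdeg : 0 < P.charpoly.degree := by
    rw [charpoly_degree_eq_dim]
    exact_mod_cast Fintype.card_pos
  have hunit : IsUnit (aeval Q P.charpoly) := by
    rw [← spectrum.zero_notMem_iff K, spectrum.map_polynomial_aeval_of_degree_pos _ _ hdeg]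
    rintro ⟨μ, hμQ, hμP⟩
    exact hPQ.notMem_of_mem_right hμQ (mem_spectrum_iff_isRoot_charpoly.mpr hμP)
  have hX : X * aeval Q P.charpoly = 0 := by
    rw [← aeval_mul_eq_mul_aeval h, aeval_self_charpoly, Matrix.zero_mul]
  calc X = X * aeval Q P.charpoly * (aeval Q P.charpoly)⁻¹ := by
        rw [Matrix.mul_assoc, mul_nonsing_inv _ ((isUnit_iff_isUnit_det _).mp hunit),
          Matrix.mul_one]
    _ = 0 := by rw [hX, Matrix.zero_mul]

theorem eq_of_mul_self_eq_of_spectrum_re_pos {P Q : Matrix n n ℂ} (hPQ : P * P = Q * Q)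
    (hP : ∀ μ ∈ spectrum ℂ P, 0 < μ.re) (hQ : ∀ μ ∈ spectrum ℂ Q, 0 < μ.re) : P = Q := by
  have hdisj : Disjoint (spectrum ℂ P) (spectrum ℂ (-Q)) := by
    rw [← spectrum.neg_eq, Set.disjoint_left]
    intro μ hμP hμQ
    have := hQ _ (Set.mem_neg.mp hμQ)
    rw [Complex.neg_re] at this
    linarith [hP μ hμP]
  have hsylv : P * (P - Q) = (P - Q) * -Q := by
    rw [Matrix.mul_sub, hPQ]
    noncomm_ring
  exact sub_eq_zero.mp (eq_zero_of_mul_eq_mul_of_disjoint_spectrum hdisj hsylv)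

section mAdjoint

variable {R : Type*} [CommRing R] [StarRing R]

noncomputable def mAdjoint (M B : Matrix n n R) : Matrix n n R := M⁻¹ * Bᴴ * M

variable {M : Matrix n n R}

theorem mAdjoint_mul (hM : IsUnit M.det) (B C : Matrix n n R) :
    mAdjoint M (B * C) = mAdjoint M C * mAdjoint M B := by
  simp only [mAdjoint, conjTranspose_mul, Matrix.mul_assoc, mul_nonsing_inv_cancel_left _ _ hM]

theorem mAdjoint_nonsing_inv (hM : IsUnit M.det) (B : Matrix n n R) :
    mAdjoint M B⁻¹ = (mAdjoint M B)⁻¹ := by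
  rw [mAdjoint, mAdjoint, Matrix.mul_inv_rev, Matrix.mul_inv_rev, nonsing_inv_nonsing_inv _ hM,
    conjTranspose_nonsing_inv, Matrix.mul_assoc]

theorem spectrum_mAdjoint {K : Type*} [Field K] [StarRing K] {M : Matrix n n K}
    (hM : IsUnit M.det) (B : Matrix n n K) :
    spectrum K (mAdjoint M B) = star (spectrum K B) := by
  lift M to (Matrix n n K)ˣ using (isUnit_iff_isUnit_det M).mpr hM
  rw [mAdjoint, ← coe_units_inv, spectrum.units_conjugate']
  exact spectrum.map_star B

theorem mAdjoint_eq_self_of_mul_self_eq {M B T : Matrix n n ℂ} (hM : IsUnit M.det)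
    (hB : mAdjoint M B = B) (hT : T * T = B) (hTspec : ∀ μ ∈ spectrum ℂ T, 0 < μ.re) :
    mAdjoint M T = T := by
  refine eq_of_mul_self_eq_of_spectrum_re_pos ?_ ?_ hTspec
  · rw [← mAdjoint_mul hM, hT, hB]
  · intro μ hμ
    rw [spectrum_mAdjoint hM] at hμ
    simpa using hTspec _ hμ

end mAdjoint

end Matrix

theorem sign_eq_generalized_polar_factor_general {n : ℕ}
    (M A T : Matrix (Fin n) (Fin n) ℂ)
    (hM : IsUnit M.det)
    (hA : M⁻¹ * Aᴴ * M = A)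
    -- `T` is the principal square root of `A²`
    (hT : T * T = A * A)
    (hTspec : ∀ mu ∈ spectrum ℂ T, 0 < mu.re) :
    -- `W := A * T⁻¹ = A (A²)^{-1/2} = sign A` and `S := T` form the canonical
    -- generalized polar decomposition of `A` with respect to `M`:
    A = (A * T⁻¹) * T ∧
    M⁻¹ * (A * T⁻¹)ᴴ * M * (A * T⁻¹) = 1 ∧
    M⁻¹ * Tᴴ * M = T := by
  have hA_self : mAdjoint M A = A := hA
  have hT_det : IsUnit T.det := (isUnit_iff_isUnit_det T).mp <|
    (spectrum.zero_notMem_iff ℂ).mp fun h0 => (hTspec 0 h0).false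
  have hTself : mAdjoint M T = T :=
    mAdjoint_eq_self_of_mul_self_eq hM (by rw [mAdjoint_mul hM, hA_self]) hT hTspec
  refine ⟨by rw [Matrix.mul_assoc, nonsing_inv_mul _ hT_det, Matrix.mul_one], ?_, hTself⟩
  calc mAdjoint M (A * T⁻¹) * (A * T⁻¹) = T⁻¹ * (T * T) * T⁻¹ := by
        rw [mAdjoint_mul hM, mAdjoint_nonsing_inv hM, hTself, hA_self, hT]
        simp only [Matrix.mul_assoc]
    _ = 1 := by
        rw [← Matrix.mul_assoc, nonsing_inv_mul _ hT_det, Matrix.one_mul, mul_nonsing_inv _ hT_det]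

/-- If `M` is nonsingular Hermitian and `A` is `M`-self-adjoint with no
purely imaginary eigenvalues, then, with `T` the principal square root of `A²`
(so that `sign A = A * T⁻¹`), the canonical generalized polar decomposition of `A`
with respect to `M` exists with polar factor `W = sign A = A (A²)^{-1/2}` and
self-adjoint factor `S = T = (A²)^{1/2}`. -/
theorem sign_eq_generalized_polar_factor {n : ℕ}
    (M A T : Matrix (Fin n) (Fin n) ℂ)
    (hM : IsUnit M.det) (hMh : Mᴴ = M)
    (hA : M⁻¹ * Aᴴ * M = A)
    (hspec : ∀ lam ∈ spectrum ℂ A, lam.re ≠ 0)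
    -- `T` is the principal square root of `A²`
    (hT : T * T = A * A)
    (hTspec : ∀ mu ∈ spectrum ℂ T, 0 < mu.re) :
    -- `W := A * T⁻¹ = A (A²)^{-1/2} = sign A` and `S := T` form the canonical
    -- generalized polar decomposition of `A` with respect to `M`:
    A = (A * T⁻¹) * T ∧
    M⁻¹ * (A * T⁻¹)ᴴ * M * (A * T⁻¹) = 1 ∧
    M⁻¹ * Tᴴ * M = T :=
  sign_eq_generalized_polar_factor_general M A T hM hA hT hTspec
end

section
/- Let Σ be a signature matrix and suppose A*ΣA = L D L* where L is unit lower triangular and D is a nonsingular real diagonal matrix. Define R = |D|^{1/2} L* and Σ̂ = sign(D) (the diagonal matrix of signs of D's entries). Then A*ΣA = R* Σ̂ R, R is upper triangular and nonsingular, and H := A R⁻¹ satisfies H*ΣH = Σ̂ and A = HR. -/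
/-!
Since `√|dᵢ| · sign dᵢ · √|dᵢ| = dᵢ`, the factor `R = |D|^{1/2} Lᴴ` satisfies
`Rᴴ sign(D) R = L D Lᴴ = Aᴴ Σ A`. It is upper triangular with diagonal `√|dᵢ| ≠ 0`, hence
invertible, and congruence by `R⁻¹` turns `Aᴴ Σ A = Rᴴ Σ̂ R` into `Hᴴ Σ H = Σ̂` for `H = A R⁻¹`.
-/

open Matrix

/-- A signature matrix: diagonal with entries `±1`. -/
def IsSignatureMatrix {k : ℕ} (S : Matrix (Fin k) (Fin k) ℂ) : Prop :=
  ∃ d : Fin k → ℝ, (∀ i, d i = 1 ∨ d i = -1) ∧ S = Matrix.diagonal fun i => (d i : ℂ)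

namespace Matrix

theorem IsLowerTriangular.conjTranspose {n α : Type*} [LT n] [AddMonoid α] [StarAddMonoid α]
    {L : Matrix n n α} (hL : L.IsLowerTriangular) : Lᴴ.IsUpperTriangular :=
  fun i j hji => by rw [conjTranspose_apply, hL hji, star_zero]

variable {m n α : Type*} [Fintype n] [DecidableEq n]

theorem det_eq_one_of_isLowerTriangular [LinearOrder n] [CommRing α] {L : Matrix n n α}
    (hL : L.IsLowerTriangular) (hdiag : ∀ i, L i i = 1) : L.det = 1 := by
  rw [det_of_isLowerTriangular L hL]
  exact Finset.prod_eq_one fun i _ => hdiag i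

theorem conjTranspose_mul_diagonal_mul_of_eq_diagonal_mul_conjTranspose [Semiring α] [StarRing α]
    {R L : Matrix n n α} {s : n → α} (hR : R = diagonal s * Lᴴ) (σ : n → α) :
    Rᴴ * diagonal σ * R = L * diagonal (fun i => star (s i) * σ i * s i) * Lᴴ := by
  rw [hR, conjTranspose_mul, conjTranspose_conjTranspose, diagonal_conjTranspose]
  simp only [Matrix.mul_assoc, ← Matrix.mul_assoc (diagonal _), diagonal_mul_diagonal]
  rfl

theorem conjTranspose_mul_inv_mul_mul_inv_of_eq [Fintype m] [CommRing α] [StarRing α]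
    {A : Matrix m n α} {S : Matrix m m α} {R T : Matrix n n α} (hR : IsUnit R.det)
    (h : Aᴴ * S * A = Rᴴ * T * R) : (A * R⁻¹)ᴴ * S * (A * R⁻¹) = T :=
  calc (A * R⁻¹)ᴴ * S * (A * R⁻¹) = R⁻¹ᴴ * (Aᴴ * S * A) * R⁻¹ := by
        simp only [conjTranspose_mul, Matrix.mul_assoc]
    _ = (R * R⁻¹)ᴴ * T * (R * R⁻¹) := by
        rw [h, conjTranspose_mul]; simp only [Matrix.mul_assoc]
    _ = T := by rw [mul_nonsing_inv R hR, conjTranspose_one, Matrix.one_mul, Matrix.mul_one]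

end Matrix

theorem Real.sqrt_abs_mul_div_abs_mul_sqrt_abs (x : ℝ) : √|x| * (x / |x|) * √|x| = x := by
  rcases eq_or_ne x 0 with rfl | hx
  · simp
  · rw [mul_comm, ← mul_assoc, Real.mul_self_sqrt (abs_nonneg x),
      mul_div_cancel₀ x (abs_ne_zero.mpr hx)]

theorem ldl_gives_indefinite_qr_general {m n : ℕ}
    (Sig : Matrix (Fin m) (Fin m) ℂ)
    (A : Matrix (Fin m) (Fin n) ℂ)
    (L : Matrix (Fin n) (Fin n) ℂ) (d : Fin n → ℝ)
    (hLdiag : ∀ i, L i i = 1)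
    (hLlow : ∀ i j : Fin n, i < j → L i j = 0)
    (hd : ∀ i, d i ≠ 0)
    (hLDL : Aᴴ * Sig * A = L * Matrix.diagonal (fun i => (d i : ℂ)) * Lᴴ) :
    let R : Matrix (Fin n) (Fin n) ℂ :=
      Matrix.diagonal (fun i => (Real.sqrt |d i| : ℂ)) * Lᴴ
    let SigHat : Matrix (Fin n) (Fin n) ℂ :=
      Matrix.diagonal (fun i => ((d i / |d i| : ℝ) : ℂ))
    Aᴴ * Sig * A = Rᴴ * SigHat * R ∧
    (∀ i j : Fin n, j < i → R i j = 0) ∧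
    IsUnit R.det ∧
    (A * R⁻¹)ᴴ * Sig * (A * R⁻¹) = SigHat ∧
    A = (A * R⁻¹) * R := by
  intro R SigHat
  have hL : L.IsLowerTriangular := fun i j hij => hLlow i j hij
  have hfac : Aᴴ * Sig * A = Rᴴ * SigHat * R := by
    rw [hLDL, conjTranspose_mul_diagonal_mul_of_eq_diagonal_mul_conjTranspose rfl]
    congr 3 with i
    simp only [RCLike.star_def, Complex.conj_ofReal]
    exact_mod_cast (Real.sqrt_abs_mul_div_abs_mul_sqrt_abs (d i)).symm
  have hupper : R.IsUpperTriangular := (blockTriangular_diagonal _).mul hL.conjTranspose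
  have hdet : IsUnit R.det := by
    rw [det_mul, det_diagonal, det_conjTranspose, det_eq_one_of_isLowerTriangular hL hLdiag,
      star_one, mul_one, isUnit_iff_ne_zero, Finset.prod_ne_zero_iff]
    exact fun i _ => Complex.ofReal_ne_zero.mpr (Real.sqrt_ne_zero'.mpr (abs_pos.mpr (hd i)))
  exact ⟨hfac, hupper, hdet, conjTranspose_mul_inv_mul_mul_inv_of_eq hdet hfac,
    (nonsing_inv_mul_cancel_right R A hdet).symm⟩

/-- From a diagonal `LDLᴴ` factorization `Aᴴ Σ A = L D Lᴴ` with unit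
lower triangular `L` and nonsingular real diagonal `D`, setting `R = |D|^{1/2} Lᴴ`
and `Σ̂ = sign D`, we get `Aᴴ Σ A = Rᴴ Σ̂ R`, `R` upper triangular and nonsingular,
and `H := A R⁻¹` satisfies `Hᴴ Σ H = Σ̂` and `A = H R`. -/
theorem ldl_gives_indefinite_qr {m n : ℕ}
    (Sig : Matrix (Fin m) (Fin m) ℂ) (hSig : IsSignatureMatrix Sig)
    (A : Matrix (Fin m) (Fin n) ℂ)
    (L : Matrix (Fin n) (Fin n) ℂ) (d : Fin n → ℝ)
    (hLdiag : ∀ i, L i i = 1)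
    (hLlow : ∀ i j : Fin n, i < j → L i j = 0)
    (hd : ∀ i, d i ≠ 0)
    (hLDL : Aᴴ * Sig * A = L * Matrix.diagonal (fun i => (d i : ℂ)) * Lᴴ) :
    let R : Matrix (Fin n) (Fin n) ℂ :=
      Matrix.diagonal (fun i => (Real.sqrt |d i| : ℂ)) * Lᴴ
    let SigHat : Matrix (Fin n) (Fin n) ℂ :=
      Matrix.diagonal (fun i => ((d i / |d i| : ℝ) : ℂ))
    Aᴴ * Sig * A = Rᴴ * SigHat * R ∧
    (∀ i j : Fin n, j < i → R i j = 0) ∧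
    IsUnit R.det ∧
    (A * R⁻¹)ᴴ * Sig * (A * R⁻¹) = SigHat ∧
    A = (A * R⁻¹) * R :=
  ldl_gives_indefinite_qr_general Sig A L d hLdiag hLlow hd hLDL
end

section
/- Let M ∈ K^{m×m}, N ∈ K^{n×n} be nonsingular, M₂ = diag(M, N), X ∈ K^{m×n}, η ∈ K. Suppose [ηX; I] = VR with V = [V₁; V₂] ∈ K^{(m+n)×n} and R ∈ K^{n×n} nonsingular, and suppose I + |η|² X⋆X is invertible where X⋆ = N⁻¹X*M. Then ηX (I + |η|² X⋆X)⁻¹ = V₁ (V^{⋆_{M₂,N}} V)⁻¹ V₂^{⋆_N}, where V^{⋆_{M₂,N}} = N⁻¹V*M₂ and V₂^{⋆_N} = N⁻¹V₂*N. -/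
open Matrix

/-!
The bottom block of `[ηX; I] = V R` says that `V₂` is a two-sided inverse of `R`, so
`V = [ηX; I] V₂`. The `(M, N)`-adjoint reverses products, hence the generalized Gram matrix is
`V^⋆ V = V₂^⋆ S V₂` with `S = [ηX; I]^⋆ [ηX; I] = I + |η|² X⋆X`, and in
`V₁ (V₂^⋆ S V₂)⁻¹ V₂^⋆ = ηX V₂ V₂⁻¹ S⁻¹ (V₂^⋆)⁻¹ V₂^⋆`
everything but `ηX S⁻¹` cancels.
-/

namespace Matrix

variable {α : Type*} [CommRing α] {l m n : Type*} [Fintype n] [DecidableEq n]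

theorem mul_mul_inv_mul_mul_mul_cancel {P Q : Matrix n n α} (hP : IsUnit P.det)
    (hQ : IsUnit Q.det) (A : Matrix m n α) (S : Matrix n n α) :
    A * Q * (P * S * Q)⁻¹ * P = A * S⁻¹ := by
  simp only [mul_inv_rev, Matrix.mul_assoc, mul_nonsing_inv_cancel_left _ _ hQ,
    nonsing_inv_mul _ hP, Matrix.mul_one]

variable [StarRing α] [Fintype l] [Fintype m]

/-- The `(M, N)`-adjoint `A^{⋆_{M,N}}`. -/
noncomputable def weightedAdjoint (M : Matrix m m α) (N : Matrix n n α) (A : Matrix m n α) :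
    Matrix n m α :=
  N⁻¹ * Aᴴ * M

theorem weightedAdjoint_mul [DecidableEq m] (M : Matrix l l α) {N : Matrix m m α}
    (K : Matrix n n α) (hN : IsUnit N.det) (A : Matrix l m α) (B : Matrix m n α) :
    weightedAdjoint M K (A * B) = weightedAdjoint N K B * weightedAdjoint M N A := by
  simp only [weightedAdjoint, conjTranspose_mul, Matrix.mul_assoc,
    mul_nonsing_inv_cancel_left _ _ hN]

theorem weightedAdjoint_smul (M : Matrix m m α) (N : Matrix n n α) (c : α) (A : Matrix m n α) :
    weightedAdjoint M N (c • A) = star c • weightedAdjoint M N A := by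
  simp only [weightedAdjoint, conjTranspose_smul, Matrix.mul_smul, Matrix.smul_mul]

theorem weightedAdjoint_one {N : Matrix n n α} (hN : IsUnit N.det) :
    weightedAdjoint N N 1 = 1 := by
  rw [weightedAdjoint, conjTranspose_one, Matrix.mul_one, nonsing_inv_mul _ hN]

theorem weightedAdjoint_fromBlocks_fromRows_mul_fromRows (M : Matrix l l α) (N : Matrix m m α)
    (K : Matrix n n α) (A C : Matrix l n α) (B D : Matrix m n α) :
    weightedAdjoint (fromBlocks M 0 0 N) K (fromRows A B) * fromRows C D =
      weightedAdjoint M K A * C + weightedAdjoint N K B * D := by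
  simp only [weightedAdjoint, conjTranspose_fromRows_eq_fromCols_conjTranspose, Matrix.mul_assoc,
    fromCols_mul_fromBlocks, fromCols_mul_fromRows, Matrix.mul_zero, add_zero, zero_add,
    ← Matrix.mul_add]

theorem isUnit_det_weightedAdjoint {M N A : Matrix n n α} (hM : IsUnit M.det) (hN : IsUnit N.det)
    (hA : IsUnit A.det) : IsUnit (weightedAdjoint M N A).det := by
  rw [weightedAdjoint, det_mul, det_mul, det_conjTranspose]
  exact ((isUnit_nonsing_inv_det N hN).mul hA.star).mul hM

end Matrix

theorem gen_qr_iteration_lemma_general {m n : ℕ}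
    (M : Matrix (Fin m) (Fin m) ℂ) (N : Matrix (Fin n) (Fin n) ℂ)
    (hN : IsUnit N.det)
    (X : Matrix (Fin m) (Fin n) ℂ) (η : ℂ)
    (V₁ : Matrix (Fin m) (Fin n) ℂ) (V₂ R : Matrix (Fin n) (Fin n) ℂ)
    (htop : η • X = V₁ * R)
    (hbot : (1 : Matrix (Fin n) (Fin n) ℂ) = V₂ * R) :
    (η • X) * (1 + ((Complex.normSq η : ℝ) : ℂ) • (N⁻¹ * Xᴴ * M * X))⁻¹ =
      V₁ *
        (N⁻¹ * (Matrix.fromRows V₁ V₂)ᴴ * Matrix.fromBlocks M 0 0 N *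
            Matrix.fromRows V₁ V₂)⁻¹ *
        (N⁻¹ * V₂ᴴ * N) := by
  have hRV₂ : R * V₂ = 1 := mul_eq_one_comm.1 hbot.symm
  have hV₂ : IsUnit V₂.det := isUnit_det_of_left_inverse hRV₂
  have hV₁ : V₁ = η • X * V₂ := by rw [htop, Matrix.mul_assoc, hRV₂, Matrix.mul_one]
  set W := fromRows (η • X) (1 : Matrix (Fin n) (Fin n) ℂ)
  set S := 1 + ((Complex.normSq η : ℝ) : ℂ) • (N⁻¹ * Xᴴ * M * X) with hS_def
  have hV : fromRows V₁ V₂ = W * V₂ := by rw [fromRows_mul, Matrix.one_mul, hV₁]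
  have hS : weightedAdjoint (fromBlocks M 0 0 N) N W * W = S := by
    rw [weightedAdjoint_fromBlocks_fromRows_mul_fromRows, weightedAdjoint_one hN,
      weightedAdjoint_smul, Matrix.mul_one, Matrix.smul_mul, Matrix.mul_smul, smul_smul, hS_def,
      Complex.normSq_eq_conj_mul_self, add_comm]
    rfl
  have hgram : weightedAdjoint (fromBlocks M 0 0 N) N (fromRows V₁ V₂) * fromRows V₁ V₂ =
      weightedAdjoint N N V₂ * S * V₂ := by
    rw [← hS, hV, weightedAdjoint_mul _ _ hN, Matrix.mul_assoc, Matrix.mul_assoc,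
      Matrix.mul_assoc]
  change _ = V₁ *
    (weightedAdjoint (fromBlocks M 0 0 N) N (fromRows V₁ V₂) * fromRows V₁ V₂)⁻¹ *
      weightedAdjoint N N V₂
  rw [hgram, hV₁, mul_mul_inv_mul_mul_mul_cancel (isUnit_det_weightedAdjoint hN hN hV₂) hV₂]

/-- If `[ηX; I] = V R` with `R` nonsingular, and `I + |η|² X⋆X` is
invertible (with `X⋆ = N⁻¹ Xᴴ M`), then
`ηX (I + |η|² X⋆X)⁻¹ = V₁ (V^{⋆_{M₂,N}} V)⁻¹ V₂^{⋆_N}`. -/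
theorem gen_qr_iteration_lemma {m n : ℕ}
    (M : Matrix (Fin m) (Fin m) ℂ) (N : Matrix (Fin n) (Fin n) ℂ)
    (hM : IsUnit M.det) (hN : IsUnit N.det)
    (X : Matrix (Fin m) (Fin n) ℂ) (η : ℂ)
    (V₁ : Matrix (Fin m) (Fin n) ℂ) (V₂ R : Matrix (Fin n) (Fin n) ℂ)
    (hR : IsUnit R.det)
    (htop : η • X = V₁ * R)
    (hbot : (1 : Matrix (Fin n) (Fin n) ℂ) = V₂ * R)
    (hinv : IsUnit (1 + ((Complex.normSq η : ℝ) : ℂ) • (N⁻¹ * Xᴴ * M * X)).det) :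
    (η • X) * (1 + ((Complex.normSq η : ℝ) : ℂ) • (N⁻¹ * Xᴴ * M * X))⁻¹ =
      V₁ *
        (N⁻¹ * (Matrix.fromRows V₁ V₂)ᴴ * Matrix.fromBlocks M 0 0 N *
            Matrix.fromRows V₁ V₂)⁻¹ *
        (N⁻¹ * V₂ᴴ * N) :=
  gen_qr_iteration_lemma_general M N hN X η V₁ V₂ R htop hbot
end

section
/- Let Σ_n, Σ_m be signature matrices, X ∈ K^{m×n}, η ∈ K, and a, b, c nonzero scalars with c ≠ 0 and Σ_n + c X*Σ_m X invertible. Then X(aI + b Σ_n X*Σ_m X)(I + c Σ_n X*Σ_m X)⁻¹ = (b/c) X + (a − b/c) X (Σ_n + c X*Σ_m X)⁻¹ Σ_n. -/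
/-! Since `Σₙ² = I`, the matrix `I + c Σₙ G` with `G = Xᴴ Σₘ X` factors as `Σₙ (Σₙ + c G)`, so its
inverse is `(Σₙ + c G)⁻¹ Σₙ`. Writing `a I + b Σₙ G = (b/c)(I + c Σₙ G) + (a - b/c) I` then splits the
left-hand side into the two terms on the right. -/

open Matrix

theorem IsSignatureMatrix.mul_self {k : ℕ} {S : Matrix (Fin k) (Fin k) ℂ}
    (h : IsSignatureMatrix S) : S * S = 1 := by
  obtain ⟨d, hd, rfl⟩ := h
  rw [diagonal_mul_diagonal, ← diagonal_one]
  congr 1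
  funext i
  rcases hd i with h | h <;> simp [h]

namespace Matrix

variable {n : Type*} [Fintype n] [DecidableEq n]

theorem one_add_smul_mul_eq_of_mul_self {R : Type*} [CommRing R] {S : Matrix n n R}
    (hS : S * S = 1) (G : Matrix n n R) (c : R) :
    1 + c • (S * G) = S * (S + c • G) := by
  rw [Matrix.mul_add, hS, Matrix.mul_smul]

theorem inv_one_add_smul_mul_of_mul_self {R : Type*} [CommRing R] {S : Matrix n n R}
    (hS : S * S = 1) (G : Matrix n n R) (c : R) :
    (1 + c • (S * G))⁻¹ = (S + c • G)⁻¹ * S := by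
  rw [one_add_smul_mul_eq_of_mul_self hS, mul_inv_rev, inv_eq_right_inv hS]

theorem isUnit_det_one_add_smul_mul_of_mul_self {R : Type*} [CommRing R] {S : Matrix n n R}
    (hS : S * S = 1) {G : Matrix n n R} {c : R} (h : IsUnit (S + c • G).det) :
    IsUnit (1 + c • (S * G)).det := by
  rw [one_add_smul_mul_eq_of_mul_self hS, det_mul]
  exact (isUnit_det_of_left_inverse hS).mul h

theorem smul_one_add_smul_mul_inv_one_add_smul {K : Type*} [Field K] (N : Matrix n n K)
    (a b : K) {c : K} (hc : c ≠ 0) (h : IsUnit (1 + c • N).det) :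
    (a • 1 + b • N) * (1 + c • N)⁻¹ = (b / c) • 1 + (a - b / c) • (1 + c • N)⁻¹ := by
  have hsplit : a • 1 + b • N = (b / c) • (1 + c • N) + (a - b / c) • (1 : Matrix n n K) := by
    rw [smul_add, smul_smul, div_mul_cancel₀ _ hc]
    module
  rw [hsplit, Matrix.add_mul, Matrix.smul_mul, Matrix.smul_mul, mul_nonsing_inv _ h,
    Matrix.one_mul]

end Matrix

theorem sigma_dwh_rewrite_general {m n : ℕ}
    (Sigm : Matrix (Fin m) (Fin m) ℂ) (Sign : Matrix (Fin n) (Fin n) ℂ)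
    (hSign : IsSignatureMatrix Sign)
    (X : Matrix (Fin m) (Fin n) ℂ) (a b c : ℂ)
    (hc : c ≠ 0)
    (hinv : IsUnit (Sign + c • (Xᴴ * Sigm * X)).det) :
    X * (a • (1 : Matrix (Fin n) (Fin n) ℂ) + b • (Sign * Xᴴ * Sigm * X)) *
        (1 + c • (Sign * Xᴴ * Sigm * X))⁻¹ =
      (b / c) • X + (a - b / c) • (X * (Sign + c • (Xᴴ * Sigm * X))⁻¹ * Sign) := by
  have hS := hSign.mul_self
  have hW : Sign * Xᴴ * Sigm * X = Sign * (Xᴴ * Sigm * X) := by simp only [Matrix.mul_assoc]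
  rw [hW, Matrix.mul_assoc X, smul_one_add_smul_mul_inv_one_add_smul _ _ _ hc
      (isUnit_det_one_add_smul_mul_of_mul_self hS hinv),
    inv_one_add_smul_mul_of_mul_self hS, Matrix.mul_add, Matrix.mul_smul, Matrix.mul_smul,
    Matrix.mul_one, Matrix.mul_assoc X]

/-- The algebraic rewrite underlying the LDLᵀ-based ΣDWH iteration:
`X(aI + b Σₙ Xᴴ Σₘ X)(I + c Σₙ Xᴴ Σₘ X)⁻¹
  = (b/c) X + (a − b/c) X (Σₙ + c Xᴴ Σₘ X)⁻¹ Σₙ`. -/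
theorem sigma_dwh_rewrite {m n : ℕ}
    (Sigm : Matrix (Fin m) (Fin m) ℂ) (Sign : Matrix (Fin n) (Fin n) ℂ)
    (hSigm : IsSignatureMatrix Sigm) (hSign : IsSignatureMatrix Sign)
    (X : Matrix (Fin m) (Fin n) ℂ) (a b c : ℂ)
    (ha : a ≠ 0) (hb : b ≠ 0) (hc : c ≠ 0)
    (hinv : IsUnit (Sign + c • (Xᴴ * Sigm * X)).det) :
    X * (a • (1 : Matrix (Fin n) (Fin n) ℂ) + b • (Sign * Xᴴ * Sigm * X)) *
        (1 + c • (Sign * Xᴴ * Sigm * X))⁻¹ =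
      (b / c) • X + (a - b / c) • (X * (Sign + c • (Xᴴ * Sigm * X))⁻¹ * Sign) :=
  sigma_dwh_rewrite_general Sigm Sign hSign X a b c hc hinv
end

section
/- Let A ∈ K^{n×n} and let Q₁, Q₂ ∈ K^{n×n} be unitary. Assume Q₁A*Q₂A has no eigenvalues on the negative real axis so that its principal square root exists. Then every eigenvalue λ of (Q₁A*Q₂A)^{1/2} satisfies σ_min(A) ≤ |λ| ≤ σ_max(A), where σ_min, σ_max denote the smallest and largest singular values of A. -/
/-!
If `T x = λ x` with `x ≠ 0`, then `(Q₁ Aᴴ Q₂ A) x = λ² x`. Unitaries preserve Euclidean norms, and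
`σ_min(A) ‖x‖ ≤ ‖A x‖ ≤ σ_max(A) ‖x‖`: expanding `x` in an eigenvector basis of `Aᴴ A`,
`‖A x‖² = ⟪x, Aᴴ A x⟫` is a combination of the eigenvalues `σᵢ²` with weights `|⟪eᵢ, x⟫|²` summing
to `‖x‖²`. The same bounds hold for `Aᴴ`, since `A Aᴴ` and `Aᴴ A` have the same characteristic
polynomial. Hence `σ_min² ‖x‖ ≤ |λ|² ‖x‖ ≤ σ_max² ‖x‖`.
-/

open Matrix

/-- The singular values of `A`: square roots of the eigenvalues of `Aᴴ A`. -/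
noncomputable def singularValue {n : ℕ} (A : Matrix (Fin n) (Fin n) ℂ) (i : Fin n) : ℝ :=
  Real.sqrt ((Matrix.isHermitian_conjTranspose_mul_self A).eigenvalues i)

namespace Matrix

open RCLike

variable {𝕜 : Type*} [RCLike 𝕜] {ι κ : Type*} [Fintype ι] [DecidableEq ι]

lemma IsHermitian.toEuclideanLin_eigenvectorBasis {B : Matrix ι ι 𝕜} (hB : B.IsHermitian)
    (i : ι) :
    toEuclideanLin B (hB.eigenvectorBasis i) = (hB.eigenvalues i : 𝕜) • hB.eigenvectorBasis i := by
  apply WithLp.ofLp_injective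
  rw [toLpLin_apply, hB.mulVec_eigenvectorBasis i, WithLp.ofLp_smul,
    RCLike.real_smul_eq_coe_smul (K := 𝕜)]

lemma IsHermitian.re_inner_toEuclideanLin_eq_sum {B : Matrix ι ι 𝕜} (hB : B.IsHermitian)
    (x : EuclideanSpace 𝕜 ι) :
    re (inner 𝕜 x (toEuclideanLin B x)) =
      ∑ i, hB.eigenvalues i * ‖inner 𝕜 (hB.eigenvectorBasis i) x‖ ^ 2 := by
  rw [← hB.eigenvectorBasis.sum_inner_mul_inner x, map_sum]
  refine Finset.sum_congr rfl fun i _ => ?_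
  rw [← isSymmetric_toEuclideanLin_iff.mpr hB, hB.toEuclideanLin_eigenvectorBasis,
    inner_smul_left, conj_ofReal, ← inner_conj_symm x, mul_left_comm, RCLike.conj_mul,
    ← inner_conj_symm, norm_conj]
  norm_cast

lemma IsHermitian.mul_norm_sq_le_re_inner_toEuclideanLin {B : Matrix ι ι 𝕜} (hB : B.IsHermitian)
    {r : ℝ} (hr : ∀ i, r ≤ hB.eigenvalues i) (x : EuclideanSpace 𝕜 ι) :
    r * ‖x‖ ^ 2 ≤ re (inner 𝕜 x (toEuclideanLin B x)) := by
  rw [hB.re_inner_toEuclideanLin_eq_sum, ← hB.eigenvectorBasis.sum_sq_norm_inner_right,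
    Finset.mul_sum]
  gcongr with i
  exact hr i

lemma IsHermitian.re_inner_toEuclideanLin_le_mul_norm_sq {B : Matrix ι ι 𝕜} (hB : B.IsHermitian)
    {r : ℝ} (hr : ∀ i, hB.eigenvalues i ≤ r) (x : EuclideanSpace 𝕜 ι) :
    re (inner 𝕜 x (toEuclideanLin B x)) ≤ r * ‖x‖ ^ 2 := by
  rw [hB.re_inner_toEuclideanLin_eq_sum, ← hB.eigenvectorBasis.sum_sq_norm_inner_right,
    Finset.mul_sum]
  gcongr with i
  exact hr i

lemma norm_toEuclideanLin_sq [Fintype κ] [DecidableEq κ] (A : Matrix κ ι 𝕜)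
    (x : EuclideanSpace 𝕜 ι) :
    ‖toEuclideanLin A x‖ ^ 2 = re (inner 𝕜 x (toEuclideanLin (Aᴴ * A) x)) := by
  rw [toLpLin_mul_same, LinearMap.comp_apply, toEuclideanLin_conjTranspose_eq_adjoint,
    LinearMap.adjoint_inner_right, inner_self_eq_norm_sq]

lemma norm_toEuclideanLin_of_mem_unitaryGroup {Q : Matrix ι ι 𝕜} (hQ : Q ∈ unitaryGroup ι 𝕜)
    (x : EuclideanSpace 𝕜 ι) : ‖toEuclideanLin Q x‖ = ‖x‖ := by
  have hQQ : Qᴴ * Q = 1 := (mem_unitaryGroup_iff').mp hQ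
  rw [← sq_eq_sq₀ (norm_nonneg _) (norm_nonneg _), norm_toEuclideanLin_sq, hQQ, toLpLin_one,
    LinearMap.id_apply, inner_self_eq_norm_sq]

lemma exists_norm_toEuclideanLin_mul_self_eq {T : Matrix ι ι 𝕜} {lam : 𝕜}
    (hlam : lam ∈ spectrum 𝕜 T) :
    ∃ x ≠ 0, ‖toEuclideanLin (T * T) x‖ = ‖lam‖ ^ 2 * ‖x‖ := by
  rw [← spectrum_toLpLin 2, ← Module.End.hasEigenvalue_iff_mem_spectrum] at hlam
  obtain ⟨x, hx⟩ := hlam.exists_hasEigenvector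
  refine ⟨x, hx.2, ?_⟩
  rw [toLpLin_mul_same, LinearMap.comp_apply, hx.apply_eq_smul, map_smul, hx.apply_eq_smul,
    smul_smul, norm_smul, norm_mul, sq]

end Matrix

section SingularValue

variable {n : ℕ} (A : Matrix (Fin n) (Fin n) ℂ)

lemma singularValue_nonneg (i : Fin n) : 0 ≤ singularValue A i := Real.sqrt_nonneg _

lemma sq_singularValue (i : Fin n) :
    singularValue A i ^ 2 = (isHermitian_conjTranspose_mul_self A).eigenvalues i :=
  Real.sq_sqrt (eigenvalues_conjTranspose_mul_self_nonneg A i)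

lemma singularValue_conjTranspose : singularValue Aᴴ = singularValue A := by
  -- `eigenvalues` lists the eigenvalues in decreasing order, so it is determined by the charpoly.
  have h : (isHermitian_conjTranspose_mul_self Aᴴ).eigenvalues =
      (isHermitian_conjTranspose_mul_self A).eigenvalues := by
    rw [IsHermitian.eigenvalues_eq_eigenvalues_iff, conjTranspose_conjTranspose, charpoly_mul_comm]
  funext i
  rw [singularValue, singularValue, h]

lemma mul_norm_le_norm_toEuclideanLin_of_le_singularValue {s : ℝ} (hs : 0 ≤ s)
    (h : ∀ i, s ≤ singularValue A i) (x : EuclideanSpace ℂ (Fin n)) :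
    s * ‖x‖ ≤ ‖toEuclideanLin A x‖ := by
  rw [← pow_le_pow_iff_left₀ (by positivity) (norm_nonneg _) two_ne_zero, mul_pow,
    norm_toEuclideanLin_sq]
  refine (isHermitian_conjTranspose_mul_self A).mul_norm_sq_le_re_inner_toEuclideanLin
    (fun i => ?_) x
  rw [← sq_singularValue]
  exact pow_le_pow_left₀ hs (h i) 2

lemma norm_toEuclideanLin_le_mul_norm_of_singularValue_le {S : ℝ} (hS : 0 ≤ S)
    (h : ∀ i, singularValue A i ≤ S) (x : EuclideanSpace ℂ (Fin n)) :
    ‖toEuclideanLin A x‖ ≤ S * ‖x‖ := by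
  rw [← pow_le_pow_iff_left₀ (norm_nonneg _) (by positivity) two_ne_zero, mul_pow,
    norm_toEuclideanLin_sq]
  refine (isHermitian_conjTranspose_mul_self A).re_inner_toEuclideanLin_le_mul_norm_sq
    (fun i => ?_) x
  rw [← sq_singularValue]
  exact pow_le_pow_left₀ (singularValue_nonneg A i) (h i) 2

variable {Q₁ Q₂ : Matrix (Fin n) (Fin n) ℂ}

lemma sq_mul_norm_le_norm_toEuclideanLin_unitary_mul_conjTranspose
    (hQ₁ : Q₁ ∈ unitaryGroup (Fin n) ℂ) (hQ₂ : Q₂ ∈ unitaryGroup (Fin n) ℂ) {s : ℝ} (hs : 0 ≤ s)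
    (h : ∀ i, s ≤ singularValue A i) (x : EuclideanSpace ℂ (Fin n)) :
    s ^ 2 * ‖x‖ ≤ ‖toEuclideanLin (Q₁ * Aᴴ * Q₂ * A) x‖ := by
  have h' : ∀ i, s ≤ singularValue Aᴴ i := by rwa [singularValue_conjTranspose]
  simp only [toLpLin_mul_same, LinearMap.comp_apply, norm_toEuclideanLin_of_mem_unitaryGroup hQ₁]
  calc s ^ 2 * ‖x‖ = s * (s * ‖x‖) := by ring
    _ ≤ s * ‖toEuclideanLin A x‖ := by
      gcongr; exact mul_norm_le_norm_toEuclideanLin_of_le_singularValue A hs h x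
    _ = s * ‖toEuclideanLin Q₂ (toEuclideanLin A x)‖ := by
      rw [norm_toEuclideanLin_of_mem_unitaryGroup hQ₂]
    _ ≤ _ := mul_norm_le_norm_toEuclideanLin_of_le_singularValue Aᴴ hs h' _

lemma norm_toEuclideanLin_unitary_mul_conjTranspose_le_sq_mul
    (hQ₁ : Q₁ ∈ unitaryGroup (Fin n) ℂ) (hQ₂ : Q₂ ∈ unitaryGroup (Fin n) ℂ) {S : ℝ} (hS : 0 ≤ S)
    (h : ∀ i, singularValue A i ≤ S) (x : EuclideanSpace ℂ (Fin n)) :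
    ‖toEuclideanLin (Q₁ * Aᴴ * Q₂ * A) x‖ ≤ S ^ 2 * ‖x‖ := by
  have h' : ∀ i, singularValue Aᴴ i ≤ S := by rwa [singularValue_conjTranspose]
  simp only [toLpLin_mul_same, LinearMap.comp_apply, norm_toEuclideanLin_of_mem_unitaryGroup hQ₁]
  calc _ ≤ S * ‖toEuclideanLin Q₂ (toEuclideanLin A x)‖ :=
        norm_toEuclideanLin_le_mul_norm_of_singularValue_le Aᴴ hS h' _
    _ = S * ‖toEuclideanLin A x‖ := by rw [norm_toEuclideanLin_of_mem_unitaryGroup hQ₂]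
    _ ≤ S * (S * ‖x‖) := by
      gcongr; exact norm_toEuclideanLin_le_mul_norm_of_singularValue_le A hS h x
    _ = S ^ 2 * ‖x‖ := by ring

end SingularValue

theorem sqrt_eigenvalue_bounds_general {n : ℕ} (hn : 0 < n)
    (A Q₁ Q₂ T : Matrix (Fin n) (Fin n) ℂ)
    (hQ₁ : Q₁ ∈ Matrix.unitaryGroup (Fin n) ℂ)
    (hQ₂ : Q₂ ∈ Matrix.unitaryGroup (Fin n) ℂ)
    -- `T` is the principal square root of `Q₁ Aᴴ Q₂ A`
    (hT : T * T = Q₁ * Aᴴ * Q₂ * A) :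
    ∀ lam ∈ spectrum ℂ T,
      haveI : Nonempty (Fin n) := Fin.pos_iff_nonempty.mp hn
      (Finset.univ.inf' Finset.univ_nonempty (singularValue A)) ≤ ‖lam‖ ∧
        ‖lam‖ ≤ Finset.univ.sup' Finset.univ_nonempty (singularValue A) := by
  have : Nonempty (Fin n) := Fin.pos_iff_nonempty.mp hn
  intro lam hlam
  obtain ⟨x, hx, hTx⟩ := exists_norm_toEuclideanLin_mul_self_eq hlam
  rw [hT] at hTx
  have hxpos : 0 < ‖x‖ := norm_pos_iff.mpr hx
  set s := Finset.univ.inf' Finset.univ_nonempty (singularValue A)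
  set S := Finset.univ.sup' Finset.univ_nonempty (singularValue A)
  have hs : 0 ≤ s := Finset.le_inf' _ _ fun i _ => singularValue_nonneg A i
  have hS : 0 ≤ S := (singularValue_nonneg A ⟨0, hn⟩).trans (Finset.le_sup' _ (Finset.mem_univ _))
  have hlo := sq_mul_norm_le_norm_toEuclideanLin_unitary_mul_conjTranspose A hQ₁ hQ₂ hs
    (fun i => Finset.inf'_le _ (Finset.mem_univ i)) x
  have hhi := norm_toEuclideanLin_unitary_mul_conjTranspose_le_sq_mul A hQ₁ hQ₂ hS
    (fun i => Finset.le_sup' _ (Finset.mem_univ i)) x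
  rw [hTx] at hlo hhi
  constructor
  · rw [← pow_le_pow_iff_left₀ hs (norm_nonneg lam) two_ne_zero]
    exact le_of_mul_le_mul_right hlo hxpos
  · rw [← pow_le_pow_iff_left₀ (norm_nonneg lam) hS two_ne_zero]
    exact le_of_mul_le_mul_right hhi hxpos

/-- For unitary `Q₁, Q₂`, every eigenvalue `λ` of the principal square
root `T` of `Q₁ Aᴴ Q₂ A` satisfies `σ_min(A) ≤ |λ| ≤ σ_max(A)`. -/
theorem sqrt_eigenvalue_bounds {n : ℕ} (hn : 0 < n)
    (A Q₁ Q₂ T : Matrix (Fin n) (Fin n) ℂ)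
    (hQ₁ : Q₁ ∈ Matrix.unitaryGroup (Fin n) ℂ)
    (hQ₂ : Q₂ ∈ Matrix.unitaryGroup (Fin n) ℂ)
    -- `Q₁ Aᴴ Q₂ A` has no eigenvalues on the negative real axis
    (hneg : ∀ mu ∈ spectrum ℂ (Q₁ * Aᴴ * Q₂ * A), ¬(mu.im = 0 ∧ mu.re < 0))
    -- `T` is the principal square root of `Q₁ Aᴴ Q₂ A`
    (hT : T * T = Q₁ * Aᴴ * Q₂ * A)
    (hTspec : ∀ mu ∈ spectrum ℂ T, 0 ≤ mu.re) :
    ∀ lam ∈ spectrum ℂ T,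
      haveI : Nonempty (Fin n) := Fin.pos_iff_nonempty.mp hn
      (Finset.univ.inf' Finset.univ_nonempty (singularValue A)) ≤ ‖lam‖ ∧
        ‖lam‖ ≤ Finset.univ.sup' Finset.univ_nonempty (singularValue A) :=
  sqrt_eigenvalue_bounds_general hn A Q₁ Q₂ T hQ₁ hQ₂ hT
end

section
/- Let Σ ∈ ℝ^{n×n} be a signature matrix, Σ₂ = diag(Σ,Σ), X ∈ K^{n×n} with ΣX*Σ = X (Σ-self-adjoint), η ∈ K. Suppose [Σ; ηX] = (Πᵀ[I; X̂]) R for some symplectic swap matrix Π, Hermitian X̂ = X̂*, and nonsingular R, and suppose Σ + X̂ΣX̂ is invertible. Then ηX(I + |η|²ΣX*ΣX)⁻¹ = V₂ (Σ + X̂ΣX̂)⁻¹ V₁*, where [V₁;V₂] = Πᵀ[I;X̂]. -/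
/-!
With `P = diag v`, the permuted graph basis is `V₁ = P - (1 - P) X̂`, `V₂ = (1 - P) + P X̂`. As the
projection `P` commutes with `Σ` and `X̂` is Hermitian, `V₁ᴴ Σ V₁ + V₂ᴴ Σ V₂ = Σ + X̂ Σ X̂ =: W`.
Substituting `[Σ; ηX] = [V₁; V₂] R` gives `Rᴴ W R = Σ + |η|² Xᴴ Σ X`, i.e.
`I + |η|² Σ Xᴴ Σ X = Σ Rᴴ W R`; inverting this product and using `R⁻ᴴ Σ = V₁ᴴ`, `ηX R⁻¹ = V₂`
yields `V₂ W⁻¹ V₁ᴴ`.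
-/

open Matrix

theorem IsStarProjection.star_mul_mul_add_star_mul_mul {A : Type*} [Ring A] [StarRing A]
    {P S X : A} (hP : IsStarProjection P) (hPS : Commute P S) (hX : star X = X) :
    star (P - (1 - P) * X) * S * (P - (1 - P) * X) +
      star ((1 - P) + P * X) * S * ((1 - P) + P * X) = S + X * S * X := by
  have hQS : Commute (1 - P) S := (Commute.one_left S).sub_left hPS
  have hPSP : P * S * P = S * P := by rw [hPS.eq, mul_assoc, hP.isIdempotentElem.eq]
  have hQSQ : (1 - P) * S * (1 - P) = S * (1 - P) := by
    rw [hQS.eq, mul_assoc, hP.one_sub.isIdempotentElem.eq]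
  have hPSQ : P * S * (1 - P) = 0 := by rw [hPS.eq, mul_assoc, hP.mul_one_sub_self, mul_zero]
  have hQSP : (1 - P) * S * P = 0 := by rw [hQS.eq, mul_assoc, hP.one_sub_mul_self, mul_zero]
  simp only [star_sub, star_add, star_mul, star_one, hP.isSelfAdjoint.star_eq, hX]
  calc (P - X * (1 - P)) * S * (P - (1 - P) * X) + ((1 - P) + X * P) * S * ((1 - P) + P * X)
      = (P * S * P + (1 - P) * S * (1 - P)) + X * ((1 - P) * S * (1 - P) + P * S * P) * X
          + (X * (P * S * (1 - P)) + (1 - P) * S * P * X)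
          - (P * S * (1 - P) * X + X * ((1 - P) * S * P)) := by
        noncomm_ring
    _ = S + X * S * X := by rw [hPSQ, hQSP, hPSP, hQSQ]; noncomm_ring

section SquareMatrix

variable {n : Type*} [Fintype n] [DecidableEq n]

theorem Matrix.mul_inv_one_add_eq_of_fromRows_eq_mul {α : Type*} [CommRing α] [StarRing α]
    {S Y V₁ V₂ R : Matrix n n α} (hSS : S * S = 1) (hS : Sᴴ = S) (hR : IsUnit R.det)
    (h : fromRows S Y = fromRows V₁ V₂ * R) :
    Y * (1 + S * Yᴴ * S * Y)⁻¹ = V₂ * (V₁ᴴ * S * V₁ + V₂ᴴ * S * V₂)⁻¹ * V₁ᴴ := by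
  rw [fromRows_mul, fromRows_ext_iff] at h
  obtain ⟨h₁, h₂⟩ := h
  set W := V₁ᴴ * S * V₁ + V₂ᴴ * S * V₂
  have hRWR : Rᴴ * W * R = S + Yᴴ * S * Y := by
    calc Rᴴ * W * R = (V₁ * R)ᴴ * S * (V₁ * R) + (V₂ * R)ᴴ * S * (V₂ * R) := by
          simp only [W, conjTranspose_mul]; noncomm_ring
      _ = S + Yᴴ * S * Y := by rw [← h₁, ← h₂, hS, hSS, one_mul]
  have hfactor : 1 + S * Yᴴ * S * Y = S * (Rᴴ * W * R) := by
    rw [hRWR, mul_add, hSS]; simp only [mul_assoc]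
  have hRH : IsUnit Rᴴ.det := by rw [det_conjTranspose]; exact hR.star
  have hV₁ : (Rᴴ)⁻¹ * S⁻¹ = V₁ᴴ := by
    rw [inv_eq_left_inv hSS, ← hS, h₁, conjTranspose_mul, ← mul_assoc, nonsing_inv_mul _ hRH,
      one_mul]
  rw [hfactor, mul_inv_rev, mul_inv_rev, mul_inv_rev, h₂]
  calc V₂ * R * (R⁻¹ * (W⁻¹ * (Rᴴ)⁻¹) * S⁻¹) = V₂ * (R * R⁻¹) * W⁻¹ * ((Rᴴ)⁻¹ * S⁻¹) := by
        simp only [mul_assoc]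
    _ = V₂ * W⁻¹ * V₁ᴴ := by rw [mul_nonsing_inv _ hR, mul_one, hV₁]

theorem Matrix.fromBlocks_neg_transpose_mul_fromRows_one {α : Type*} [Ring α]
    (A B X : Matrix n n α) :
    (fromBlocks A B (-B) A)ᵀ * fromRows 1 X = fromRows (Aᵀ - Bᵀ * X) (Bᵀ + Aᵀ * X) := by
  rw [fromBlocks_transpose, transpose_neg]
  -- not `rw`: this product elaborates through the `CStarMatrix` instance, which agrees with the
  -- `Matrix` one only up to unfolding
  exact (fromBlocks_mul_fromRows ..).trans (by rw [mul_one, mul_one, neg_mul, ← sub_eq_add_neg])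

theorem Matrix.isStarProjection_diagonal {α : Type*} [Semiring α] [StarRing α] {d : n → α}
    (hd : ∀ i, IsStarProjection (d i)) :
    IsStarProjection (diagonal d) where
  isIdempotentElem := by
    rw [IsIdempotentElem, diagonal_mul_diagonal]
    exact congrArg _ (funext fun i => (hd i).isIdempotentElem.eq)
  isSelfAdjoint := by
    rw [IsSelfAdjoint, star_eq_conjTranspose, diagonal_conjTranspose]
    exact congrArg _ (funext fun i => (hd i).isSelfAdjoint.star_eq)

end SquareMatrix

namespace IsSignatureMatrix

variable {k : ℕ} {S : Matrix (Fin k) (Fin k) ℂ}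

theorem mul_self_s14 (hS : IsSignatureMatrix S) : S * S = 1 := by
  obtain ⟨d, hd, rfl⟩ := hS
  rw [diagonal_mul_diagonal, ← diagonal_one]
  congr 1; funext i; rcases hd i with h | h <;> simp [h]

theorem conjTranspose_eq (hS : IsSignatureMatrix S) : Sᴴ = S := by
  obtain ⟨d, -, rfl⟩ := hS
  simp [diagonal_conjTranspose]

theorem commute_diagonal (hS : IsSignatureMatrix S) (f : Fin k → ℂ) : Commute (diagonal f) S := by
  obtain ⟨d, -, rfl⟩ := hS
  exact Matrix.commute_diagonal f _

end IsSignatureMatrix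

theorem plg_iteration_lemma_general {n : ℕ}
    (Sig : Matrix (Fin n) (Fin n) ℂ) (hSig : IsSignatureMatrix Sig)
    (X Xhat : Matrix (Fin n) (Fin n) ℂ) (η : ℂ)
    (hXhat : Xhatᴴ = Xhat)
    (v : Fin n → ℝ) (hv : ∀ i, v i = 0 ∨ v i = 1)
    (V₁ V₂ R : Matrix (Fin n) (Fin n) ℂ) (hR : IsUnit R.det)
    (hV : Matrix.fromRows V₁ V₂ =
      (Matrix.fromBlocks (Matrix.diagonal fun i => (v i : ℂ))
          (Matrix.diagonal fun i => ((1 - v i : ℝ) : ℂ))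
          (-(Matrix.diagonal fun i => ((1 - v i : ℝ) : ℂ)))
          (Matrix.diagonal fun i => (v i : ℂ)))ᵀ *
        Matrix.fromRows 1 Xhat)
    (hVR : Matrix.fromRows Sig (η • X) = Matrix.fromRows V₁ V₂ * R) :
    (η • X) * (1 + ((Complex.normSq η : ℝ) : ℂ) • (Sig * Xᴴ * Sig * X))⁻¹ =
      V₂ * (Sig + Xhat * Sig * Xhat)⁻¹ * V₁ᴴ := by
  set P : Matrix (Fin n) (Fin n) ℂ := diagonal fun i => (v i : ℂ)
  have hP : IsStarProjection P := isStarProjection_diagonal fun i => by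
    rcases hv i with h | h <;> simp [h]
  have hQ : (diagonal fun i => ((1 - v i : ℝ) : ℂ)) = 1 - P := by
    rw [← diagonal_one, diagonal_sub]; push_cast; rfl
  rw [fromBlocks_neg_transpose_mul_fromRows_one, diagonal_transpose, diagonal_transpose, hQ,
    fromRows_ext_iff] at hV
  have hW : V₁ᴴ * Sig * V₁ + V₂ᴴ * Sig * V₂ = Sig + Xhat * Sig * Xhat := by
    simpa only [hV.1, hV.2, star_eq_conjTranspose] using
      hP.star_mul_mul_add_star_mul_mul (hSig.commute_diagonal _) hXhat
  have hgram : Sig * (η • X)ᴴ * Sig * (η • X) =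
      ((Complex.normSq η : ℝ) : ℂ) • (Sig * Xᴴ * Sig * X) := by
    rw [conjTranspose_smul, ← Complex.mul_conj]
    simp only [mul_smul_comm, smul_mul_assoc, smul_smul, Complex.star_def]
  rw [← hgram, ← hW]
  exact mul_inv_one_add_eq_of_fromRows_eq_mul hSig.mul_self_s14 hSig.conjTranspose_eq hR hVR

/-- Permuted Lagrangian graph bases in the ΣDWH iteration: if
`[Σ; ηX] = (Πᵀ [I; X̂]) R` with `Π` a symplectic swap, `X̂` Hermitian, `R`
nonsingular and `Σ + X̂ Σ X̂` invertible, then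
`ηX (I + |η|² Σ Xᴴ Σ X)⁻¹ = V₂ (Σ + X̂ Σ X̂)⁻¹ V₁ᴴ` where `[V₁;V₂] = Πᵀ [I; X̂]`. -/
theorem plg_iteration_lemma {n : ℕ}
    (Sig : Matrix (Fin n) (Fin n) ℂ) (hSig : IsSignatureMatrix Sig)
    (X Xhat : Matrix (Fin n) (Fin n) ℂ) (η : ℂ)
    (hX : Sig * Xᴴ * Sig = X) (hXhat : Xhatᴴ = Xhat)
    (v : Fin n → ℝ) (hv : ∀ i, v i = 0 ∨ v i = 1)
    (V₁ V₂ R : Matrix (Fin n) (Fin n) ℂ) (hR : IsUnit R.det)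
    (hV : Matrix.fromRows V₁ V₂ =
      (Matrix.fromBlocks (Matrix.diagonal fun i => (v i : ℂ))
          (Matrix.diagonal fun i => ((1 - v i : ℝ) : ℂ))
          (-(Matrix.diagonal fun i => ((1 - v i : ℝ) : ℂ)))
          (Matrix.diagonal fun i => (v i : ℂ)))ᵀ *
        Matrix.fromRows 1 Xhat)
    (hVR : Matrix.fromRows Sig (η • X) = Matrix.fromRows V₁ V₂ * R)
    (hinv : IsUnit (Sig + Xhat * Sig * Xhat).det) :
    (η • X) * (1 + ((Complex.normSq η : ℝ) : ℂ) • (Sig * Xᴴ * Sig * X))⁻¹ =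
      V₂ * (Sig + Xhat * Sig * Xhat)⁻¹ * V₁ᴴ :=
  plg_iteration_lemma_general Sig hSig X Xhat η hXhat v hv V₁ V₂ R hR hV hVR
end

section
/- Let Σ be a signature matrix and let X ∈ K^{n×n} be Σ-self-adjoint and invertible with generalized polar decomposition X = WS (W^{⋆_Σ}W = I, S Σ-self-adjoint). Then for any nonzero μ, the scaled Newton iterate (1/2)(μX + μ⁻¹ΣX^{−*}Σ) equals W·(1/2)(μS + μ⁻¹S⁻¹). -/
open Matrix

theorem IsSignatureMatrix.mul_self_eq_one {k : ℕ} {Sig : Matrix (Fin k) (Fin k) ℂ}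
    (hSig : IsSignatureMatrix Sig) : Sig * Sig = 1 := by
  obtain ⟨d, hd, rfl⟩ := hSig
  rw [diagonal_mul_diagonal, ← diagonal_one]
  congr 1
  funext i
  rcases hd i with h | h <;> simp [h]

namespace Matrix

variable {m R : Type*} [Fintype m] [DecidableEq m] [CommRing R] {Sig : Matrix m m R}

theorem conj_mul_of_mul_self_eq_one (hSig : Sig * Sig = 1) (A B : Matrix m m R) :
    Sig * (A * B) * Sig = (Sig * A * Sig) * (Sig * B * Sig) := by
  simp only [Matrix.mul_assoc, ← Matrix.mul_assoc Sig Sig, hSig, Matrix.one_mul]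

theorem conj_inv_of_mul_self_eq_one (hSig : Sig * Sig = 1) (A : Matrix m m R) :
    Sig * A⁻¹ * Sig = (Sig * A * Sig)⁻¹ := by
  rw [mul_inv_rev, mul_inv_rev, inv_eq_left_inv hSig, Matrix.mul_assoc]

/-- Conjugation by `Σ` commutes with inversion and turns `Sᴴ Wᴴ` into `S W⁻¹`. -/
theorem conj_inv_conjTranspose_mul [StarRing R] {W S : Matrix m m R} (hSig : Sig * Sig = 1)
    (hW : Sig * Wᴴ * Sig * W = 1) (hS : Sig * Sᴴ * Sig = S) :
    Sig * ((W * S)ᴴ)⁻¹ * Sig = W * S⁻¹ := by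
  have hWinv : Sig * Wᴴ * Sig = W⁻¹ := (inv_eq_left_inv hW).symm
  rw [conj_inv_of_mul_self_eq_one hSig, conjTranspose_mul, conj_mul_of_mul_self_eq_one hSig,
    hS, hWinv, mul_inv_rev, nonsing_inv_nonsing_inv W (isUnit_det_of_left_inverse hW)]

end Matrix

theorem newton_iterate_factorization_general {n : ℕ}
    (Sig X W S : Matrix (Fin n) (Fin n) ℂ)
    (hSig : IsSignatureMatrix Sig)
    (hdec : X = W * S)
    (hW : Sig * Wᴴ * Sig * W = 1)
    (hS : Sig * Sᴴ * Sig = S)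
    (μ : ℂ) :
    (1 / 2 : ℂ) • (μ • X + μ⁻¹ • (Sig * (Xᴴ)⁻¹ * Sig)) =
      W * ((1 / 2 : ℂ) • (μ • S + μ⁻¹ • S⁻¹)) := by
  rw [hdec, conj_inv_conjTranspose_mul hSig.mul_self_eq_one hW hS]
  simp only [Matrix.mul_smul, Matrix.mul_add]

/-- For `Σ`-self-adjoint invertible `X = W S` (with `W` a
`Σ`-automorphism and `S` `Σ`-self-adjoint), the scaled Newton iterate satisfies
`(1/2)(μX + μ⁻¹ Σ X⁻ᴴ Σ) = W (1/2)(μS + μ⁻¹ S⁻¹)`. -/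
theorem newton_iterate_factorization {n : ℕ}
    (Sig X W S : Matrix (Fin n) (Fin n) ℂ)
    (hSig : IsSignatureMatrix Sig)
    (hXsa : Sig * Xᴴ * Sig = X)
    (hX : IsUnit X.det)
    (hdec : X = W * S)
    (hW : Sig * Wᴴ * Sig * W = 1)
    (hS : Sig * Sᴴ * Sig = S)
    (μ : ℂ) (hμ : μ ≠ 0) :
    (1 / 2 : ℂ) • (μ • X + μ⁻¹ • (Sig * (Xᴴ)⁻¹ * Sig)) =
      W * ((1 / 2 : ℂ) • (μ • S + μ⁻¹ • S⁻¹)) :=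
  newton_iterate_factorization_general Sig X W S hSig hdec hW hS μ
end

section
/- Let Σ_m, Σ_n be signature matrices and X ∈ K^{m×n}, and suppose [√c X; I] = HR where H = [H₁;H₂] ∈ K^{(m+n)×n} satisfies H*diag(Σ_m,Σ_n)H = Σ̂ for a signature matrix Σ̂, R nonsingular, and c > 0 with I + c Σ_n X*Σ_m X invertible. Then X(aI + b Σ_n X*Σ_m X)(I + c Σ_n X*Σ_m X)⁻¹ = (b/c)X + (1/√c)(a − b/c) H₁ Σ̂ H₂* Σ_n, for any scalars a, b. -/
open Matrix

namespace Matrix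

variable {K : Type*} {m n p : Type*}

theorem conjTranspose_fromRows_mul_fromBlocks_mul_fromRows [Fintype m] [Fintype p] [Semiring K]
    [StarRing K] (A : Matrix m n K) (B : Matrix p n K) (S : Matrix m m K) (T : Matrix p p K) :
    (fromRows A B)ᴴ * fromBlocks S 0 0 T * fromRows A B = Aᴴ * S * A + Bᴴ * T * B := by
  rw [conjTranspose_fromRows_eq_fromCols_conjTranspose, Matrix.mul_assoc, fromBlocks_mul_fromRows,
    fromCols_mul_fromRows]
  simp only [Matrix.zero_mul, add_zero, zero_add, Matrix.mul_assoc]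

theorem mul_smul_one_add_smul_mul_eq [Fintype n] [DecidableEq n] [Field K] (X : Matrix m n K)
    (Y N' : Matrix n n K) (a b c : K) (hc : c ≠ 0) (hN : (1 + c • Y) * N' = 1) :
    X * (a • 1 + b • Y) * N' = (b / c) • X + (a - b / c) • (X * N') := by
  have hsplit : a • (1 : Matrix n n K) + b • Y = (b / c) • (1 + c • Y) + (a - b / c) • 1 := by
    rw [smul_add, smul_smul, div_mul_cancel₀ b hc, sub_smul]
    abel
  rw [hsplit, Matrix.mul_add, Matrix.add_mul, Matrix.mul_smul, Matrix.smul_mul, Matrix.mul_assoc,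
    hN, Matrix.mul_one, Matrix.mul_smul, Matrix.mul_one, Matrix.smul_mul]

theorem smul_mul_conjTranspose_mul_mul_eq_sqrt_smul [Fintype m] [Fintype n] {c : ℝ} (hc : 0 ≤ c)
    (S : Matrix n n ℂ) (T : Matrix m m ℂ) (X : Matrix m n ℂ) :
    (c : ℂ) • (S * Xᴴ * T * X) =
      S * ((Real.sqrt c : ℂ) • X)ᴴ * T * ((Real.sqrt c : ℂ) • X) := by
  rw [conjTranspose_smul, Complex.star_def, Complex.conj_ofReal]
  simp only [Matrix.mul_smul, Matrix.smul_mul, smul_smul]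
  rw [← Complex.ofReal_mul, Real.mul_self_sqrt hc]

theorem one_add_gram_mul_hyperbolic_qr_eq_one [Fintype m] [Fintype n] [DecidableEq n] [CommRing K]
    [StarRing K] {Sigm : Matrix m m K} {Sign SigHat : Matrix n n K} (hSign : Sign * Sign = 1)
    (hSigHat : SigHat * SigHat = 1) {H₁ : Matrix m n K} {H₂ R : Matrix n n K} (hbot : H₂ * R = 1)
    (hH : H₁ᴴ * Sigm * H₁ + H₂ᴴ * Sign * H₂ = SigHat) :
    (1 + Sign * (H₁ * R)ᴴ * Sigm * (H₁ * R)) * (H₂ * SigHat * H₂ᴴ * Sign) = 1 := by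
  have hRH₂ : R * H₂ = 1 := mul_eq_one_comm.mp hbot
  have hgram : Sign + (H₁ * R)ᴴ * Sigm * (H₁ * R) = Rᴴ * SigHat * R := by
    calc Sign + (H₁ * R)ᴴ * Sigm * (H₁ * R)
        = (H₂ * R)ᴴ * Sign * (H₂ * R) + (H₁ * R)ᴴ * Sigm * (H₁ * R) := by
          rw [hbot, conjTranspose_one, Matrix.one_mul, Matrix.mul_one]
      _ = Rᴴ * (H₁ᴴ * Sigm * H₁ + H₂ᴴ * Sign * H₂) * R := by
          simp only [conjTranspose_mul, Matrix.mul_add, Matrix.add_mul, Matrix.mul_assoc]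
          exact add_comm _ _
      _ = Rᴴ * SigHat * R := by rw [hH]
  have hfactor : 1 + Sign * (H₁ * R)ᴴ * Sigm * (H₁ * R) = Sign * (Rᴴ * SigHat * R) := by
    rw [← hgram, Matrix.mul_add, hSign]
    simp only [Matrix.mul_assoc]
  calc (1 + Sign * (H₁ * R)ᴴ * Sigm * (H₁ * R)) * (H₂ * SigHat * H₂ᴴ * Sign)
      = Sign * Rᴴ * SigHat * (R * H₂) * SigHat * H₂ᴴ * Sign := by
        rw [hfactor]; simp only [Matrix.mul_assoc]
    _ = Sign * (H₂ * R)ᴴ * Sign := by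
        rw [hRH₂, Matrix.mul_one]
        simp only [conjTranspose_mul, Matrix.mul_assoc]
        rw [← Matrix.mul_assoc SigHat, hSigHat, Matrix.one_mul]
    _ = 1 := by rw [hbot, conjTranspose_one, Matrix.mul_one, hSign]

end Matrix

theorem sigma_dwh_hyperbolic_qr_general {m n : ℕ}
    (Sigm : Matrix (Fin m) (Fin m) ℂ) (Sign : Matrix (Fin n) (Fin n) ℂ)
    (hSign : IsSignatureMatrix Sign)
    (X : Matrix (Fin m) (Fin n) ℂ) (a b : ℂ) (c : ℝ) (hc : 0 < c)
    (H₁ : Matrix (Fin m) (Fin n) ℂ) (H₂ R SigHat : Matrix (Fin n) (Fin n) ℂ)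
    (hSigHat : IsSignatureMatrix SigHat)
    (htop : (Real.sqrt c : ℂ) • X = H₁ * R)
    (hbot : (1 : Matrix (Fin n) (Fin n) ℂ) = H₂ * R)
    (hH : (Matrix.fromRows H₁ H₂)ᴴ * Matrix.fromBlocks Sigm 0 0 Sign *
        Matrix.fromRows H₁ H₂ = SigHat) :
    X * (a • (1 : Matrix (Fin n) (Fin n) ℂ) + b • (Sign * Xᴴ * Sigm * X)) *
        (1 + (c : ℂ) • (Sign * Xᴴ * Sigm * X))⁻¹ =
      (b / (c : ℂ)) • X +
        ((1 / (Real.sqrt c : ℂ)) * (a - b / (c : ℂ))) • (H₁ * SigHat * H₂ᴴ * Sign) := by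
  have hsqrt : (Real.sqrt c : ℂ) ≠ 0 := by exact_mod_cast (Real.sqrt_pos.mpr hc).ne'
  have hright : (1 + (c : ℂ) • (Sign * Xᴴ * Sigm * X)) * (H₂ * SigHat * H₂ᴴ * Sign) = 1 := by
    rw [smul_mul_conjTranspose_mul_mul_eq_sqrt_smul hc.le, htop]
    exact one_add_gram_mul_hyperbolic_qr_eq_one hSign.mul_self hSigHat.mul_self hbot.symm
      (by rwa [conjTranspose_fromRows_mul_fromBlocks_mul_fromRows] at hH)
  have hXN : (Real.sqrt c : ℂ) • (X * (H₂ * SigHat * H₂ᴴ * Sign)) = H₁ * SigHat * H₂ᴴ * Sign := by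
    rw [← Matrix.smul_mul, htop]
    simp only [Matrix.mul_assoc]
    rw [← Matrix.mul_assoc R, mul_eq_one_comm.mp hbot.symm, Matrix.one_mul]
  rw [inv_eq_right_inv hright, mul_smul_one_add_smul_mul_eq X _ _ a b c (by exact_mod_cast hc.ne')
    hright, ← hXN, smul_smul]
  congr 2
  field_simp

/-- The hyperbolic-QR-based form of the ΣDWH iteration: if
`[√c X; I] = H R` with `Hᴴ diag(Σₘ,Σₙ) H = Σ̂` a signature matrix and `R`
nonsingular, then
`X(aI + b Σₙ Xᴴ Σₘ X)(I + c Σₙ Xᴴ Σₘ X)⁻¹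
  = (b/c) X + (1/√c)(a − b/c) H₁ Σ̂ H₂ᴴ Σₙ`. -/
theorem sigma_dwh_hyperbolic_qr {m n : ℕ}
    (Sigm : Matrix (Fin m) (Fin m) ℂ) (Sign : Matrix (Fin n) (Fin n) ℂ)
    (hSigm : IsSignatureMatrix Sigm) (hSign : IsSignatureMatrix Sign)
    (X : Matrix (Fin m) (Fin n) ℂ) (a b : ℂ) (c : ℝ) (hc : 0 < c)
    (H₁ : Matrix (Fin m) (Fin n) ℂ) (H₂ R SigHat : Matrix (Fin n) (Fin n) ℂ)
    (hSigHat : IsSignatureMatrix SigHat)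
    (hR : IsUnit R.det)
    (htop : (Real.sqrt c : ℂ) • X = H₁ * R)
    (hbot : (1 : Matrix (Fin n) (Fin n) ℂ) = H₂ * R)
    (hH : (Matrix.fromRows H₁ H₂)ᴴ * Matrix.fromBlocks Sigm 0 0 Sign *
        Matrix.fromRows H₁ H₂ = SigHat)
    (hinv : IsUnit (1 + (c : ℂ) • (Sign * Xᴴ * Sigm * X)).det) :
    X * (a • (1 : Matrix (Fin n) (Fin n) ℂ) + b • (Sign * Xᴴ * Sigm * X)) *
        (1 + (c : ℂ) • (Sign * Xᴴ * Sigm * X))⁻¹ =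
      (b / (c : ℂ)) • X +
        ((1 / (Real.sqrt c : ℂ)) * (a - b / (c : ℂ))) • (H₁ * SigHat * H₂ᴴ * Sign) :=
  sigma_dwh_hyperbolic_qr_general Sigm Sign hSign X a b c hc H₁ H₂ R SigHat hSigHat htop hbot hH
end
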